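/- arXiv:math/0411623 — 2 statements merged into one kernel-verified Lean document; each statement's English description precedes it below -/
import Mathlib

section
/- Let G be a finite abelian group with |G| ≤ 2^h. If h + i elements of G are chosen independently and uniformly at random (with replacement), then the probability that they generate G is at least 1 - 2^(-i). -/
open Finset

set_option maxHeartbeats 1000000

/-- For every proper subgroup of a finite abelian group there is a nontrivial
character (into `ℂˣ`) vanishing on it. -/
lemma aux_char_of_proper {G : Type*} [CommGroup G] [Finite G] {H : Subgroup G} (hH : H ≠ ⊤) :
    ∃ χ : G →* ℂˣ, χ ≠ 1 ∧ ∀ g ∈ H, χ g = 1 := by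
  obtain ⟨a, ha⟩ : ∃ a : G, a ∉ H := by
    by_contra hc
    push_neg at hc
    exact hH (Subgroup.eq_top_iff' H |>.mpr hc)
  have ha' : (QuotientGroup.mk a : G ⧸ H) ≠ 1 := by
    simpa [QuotientGroup.eq_one_iff] using ha
  haveI : NeZero (Monoid.exponent (G ⧸ H)) := ⟨Monoid.exponent_ne_zero_of_finite⟩
  obtain ⟨φ, hφ⟩ := CommGroup.exists_apply_ne_one_of_hasEnoughRootsOfUnity (G ⧸ H) ℂ ha'
  refine ⟨φ.comp (QuotientGroup.mk' H), fun hc => hφ ?_, fun g hg => ?_⟩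
  · have := congrFun (congrArg DFunLike.coe hc) a
    simpa using this
  · have : (QuotientGroup.mk g : G ⧸ H) = 1 := (QuotientGroup.eq_one_iff g).mpr hg
    simp [this]

/-- If `G` is a finite abelian group with `|G| ≤ 2^h`, then `h + i` elements of `G` chosen
independently and uniformly at random generate `G` with probability at least `1 - 2^(-i)`. -/
theorem stmt_3 (G : Type*) [CommGroup G] [Finite G] (h i : ℕ) (hG : Nat.card G ≤ 2^h) :
    1 - (2:ℝ) ^ (-(i:ℤ)) ≤
      (Nat.card {f : Fin (h + i) → G // Subgroup.closure (Set.range f) = ⊤} : ℝ) /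
        (Nat.card G : ℝ) ^ (h + i) := by
  classical
  cases nonempty_fintype G
  set n := h + i with hn
  set N := Nat.card G with hNdef
  have hN0 : 0 < N := Nat.card_pos
  -- the dual group is finite with the same cardinality
  haveI : NeZero (Monoid.exponent G) := ⟨Monoid.exponent_ne_zero_of_finite⟩
  obtain ⟨e⟩ := CommGroup.monoidHom_mulEquiv_of_hasEnoughRootsOfUnity G ℂ
  haveI : Finite (G →* ℂˣ) := Finite.of_equiv G e.symm.toEquiv
  haveI : Fintype (G →* ℂˣ) := Fintype.ofFinite _
  have hdualcard : Fintype.card (G →* ℂˣ) = N := by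
    rw [← Nat.card_eq_fintype_card, Nat.card_congr e.toEquiv]
  -- bad tuples
  set B : Finset (Fin n → G) :=
    univ.filter (fun f => ¬ Subgroup.closure (Set.range f) = ⊤) with hB
  set A : Finset (Fin n → G) :=
    univ.filter (fun f => Subgroup.closure (Set.range f) = ⊤) with hA
  have hAcard : (Nat.card {f : Fin n → G // Subgroup.closure (Set.range f) = ⊤}) = A.card := by
    rw [Nat.card_eq_fintype_card, Fintype.card_subtype]
  have htotal : A.card + B.card = N ^ n := by
    rw [hA, hB, card_filter_add_card_filter_not, card_univ, Fintype.card_fun,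
      hNdef, Nat.card_eq_fintype_card, Fintype.card_fin]
  -- the set of nontrivial characters
  set D : Finset (G →* ℂˣ) := univ.filter (fun χ => χ ≠ 1) with hD
  have hDcard : D.card ≤ 2 ^ h := le_trans (le_trans (card_filter_le _ _) (by simp [hdualcard])) hG
  -- each bad tuple lies in the kernel power of some nontrivial character
  set U : Finset (Fin n → G) :=
    D.biUnion (fun χ => univ.filter (fun f : Fin n → G => ∀ j, f j ∈ χ.ker)) with hU
  have hsub : B ⊆ U := by
    intro f hf
    rw [hB, mem_filter] at hf
    obtain ⟨χ, hχ1, hχH⟩ := aux_char_of_proper hf.2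
    refine mem_biUnion.mpr ⟨χ, by simp [hD, hχ1], ?_⟩
    refine mem_filter.mpr ⟨mem_univ _, fun j => ?_⟩
    exact MonoidHom.mem_ker.mpr (hχH _ (Subgroup.subset_closure ⟨j, rfl⟩))
  -- kernel of a nontrivial character has at most half the elements
  have hker : ∀ χ : G →* ℂˣ, χ ≠ 1 → 2 * Nat.card χ.ker ≤ N := by
    intro χ hχ
    have hkt : χ.ker ≠ ⊤ := by
      intro hc
      apply hχ
      ext g
      simpa using MonoidHom.mem_ker.mp (hc ▸ Subgroup.mem_top g)
    have hidx : χ.ker.index ≠ 1 := fun hc => hkt (Subgroup.index_eq_one.mp hc)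
    have hidx0 : χ.ker.index ≠ 0 := Subgroup.index_ne_zero_of_finite
    have h2 : 2 ≤ χ.ker.index := by omega
    calc 2 * Nat.card χ.ker ≤ Nat.card χ.ker * χ.ker.index := by
          rw [mul_comm]; exact Nat.mul_le_mul_left _ h2
      _ = N := χ.ker.card_mul_index
  -- the kernel-power count
  have hkerpow : ∀ χ : G →* ℂˣ,
      (univ.filter (fun f : Fin n → G => ∀ j, f j ∈ χ.ker)).card = Nat.card χ.ker ^ n := by
    intro χ
    rw [← Fintype.card_subtype, ← Nat.card_eq_fintype_card,
      Nat.card_congr (Equiv.subtypePiEquivPi (p := fun _ b => b ∈ χ.ker)),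
      Nat.card_pi, Finset.prod_const, card_univ, Fintype.card_fin]
  -- bound the bad count in ℝ
  have hBreal : (B.card : ℝ) ≤ (N : ℝ) ^ n * (2:ℝ) ^ (-(i:ℤ)) := by
    have h1 : (B.card : ℝ) ≤ ∑ χ ∈ D, ((Nat.card χ.ker : ℝ)) ^ n := by
      have s1 : B.card ≤ U.card := Finset.card_le_card hsub
      have s2 : U.card ≤ ∑ χ ∈ D, (univ.filter (fun f : Fin n → G => ∀ j, f j ∈ χ.ker)).card :=
        Finset.card_biUnion_le
      have s3 : ∑ χ ∈ D, (univ.filter (fun f : Fin n → G => ∀ j, f j ∈ χ.ker)).card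
          = ∑ χ ∈ D, Nat.card χ.ker ^ n :=
        Finset.sum_congr rfl fun χ _ => hkerpow χ
      calc (B.card : ℝ) ≤ ((∑ χ ∈ D, Nat.card χ.ker ^ n : ℕ) : ℝ) := by
            exact_mod_cast le_trans s1 (s3 ▸ s2)
        _ = ∑ χ ∈ D, ((Nat.card χ.ker : ℝ)) ^ n := by push_cast; ring
    have h2 : ∀ χ ∈ D, ((Nat.card χ.ker : ℝ)) ^ n ≤ (N : ℝ) ^ n / 2 ^ n := by
      intro χ hχ
      have hχ1 : χ ≠ 1 := by simpa [hD] using hχ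
      have := hker χ hχ1
      have hk : (2:ℝ) * (Nat.card χ.ker : ℝ) ≤ (N : ℝ) := by exact_mod_cast this
      rw [le_div_iff₀ (by positivity)]
      calc ((Nat.card χ.ker : ℝ)) ^ n * 2 ^ n = ((2:ℝ) * (Nat.card χ.ker)) ^ n := by ring
        _ ≤ (N : ℝ) ^ n := by
            apply pow_le_pow_left₀ (by positivity) hk
    calc (B.card : ℝ) ≤ ∑ χ ∈ D, ((Nat.card χ.ker : ℝ)) ^ n := h1
      _ ≤ ∑ _χ ∈ D, (N : ℝ) ^ n / 2 ^ n := Finset.sum_le_sum h2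
      _ = D.card * ((N : ℝ) ^ n / 2 ^ n) := by rw [Finset.sum_const, nsmul_eq_mul]
      _ ≤ (2:ℝ) ^ h * ((N : ℝ) ^ n / 2 ^ n) := by
          apply mul_le_mul_of_nonneg_right _ (by positivity)
          exact_mod_cast hDcard
      _ = (N : ℝ) ^ n * (2:ℝ) ^ (-(i:ℤ)) := by
          rw [hn]
          rw [div_eq_mul_inv]
          have : ((2:ℝ) ^ (h + i))⁻¹ = (2:ℝ) ^ (-((h:ℤ) + i)) := by
            rw [← zpow_natCast]
            push_cast
            rw [← zpow_neg]
          rw [this]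
          have h2h : (2:ℝ) ^ h = (2:ℝ) ^ (h:ℤ) := by rw [zpow_natCast]
          rw [h2h, mul_comm ((2:ℝ)^(h:ℤ)), mul_assoc, ← zpow_add₀ (by norm_num : (2:ℝ) ≠ 0)]
          ring_nf
  -- conclude
  have hNpow : (0:ℝ) < (N : ℝ) ^ n := by positivity
  rw [hAcard, le_div_iff₀ hNpow]
  have hA' : (A.card : ℝ) = (N:ℝ) ^ n - B.card := by
    have : (A.card : ℝ) + B.card = (N:ℝ) ^ n := by exact_mod_cast htotal
    linarith
  rw [hA']
  nlinarith [hBreal, hNpow]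
end

section
/- Let q ≥ 2, g ≥ 1, and e ≥ 3 be integers. Then q^e - 2g·q^{e/2} - ∑_{i | e, i < e}(q^i + 2g·q^{i/2}) ≥ q^e(1 - q^{-1}) - 4g·q^{e/2}. -/
lemma geo_aux (x : ℝ) (hx : 2 ≤ x) (n : ℕ) : ∑ i ∈ Finset.range n, x ^ i ≤ x ^ n := by
  induction n with
  | zero => simp
  | succ n ih =>
    rw [Finset.sum_range_succ, pow_succ]
    nlinarith [pow_nonneg (by linarith : (0:ℝ) ≤ x) n]

/-- For integers `q ≥ 2`, `g ≥ 1`, `e ≥ 3`: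
`q^e - 2g q^{e/2} - ∑_{i | e, i < e} (q^i + 2g q^{i/2}) ≥ q^e (1 - q⁻¹) - 4g q^{e/2}`. -/
theorem stmt_6 (q g e : ℕ) (hq : 2 ≤ q) (hg : 1 ≤ g) (he : 3 ≤ e) :
    (q:ℝ)^e * (1 - (q:ℝ)⁻¹) - 4 * g * (q:ℝ) ^ ((e:ℝ)/2) ≤
      (q:ℝ)^e - 2 * g * (q:ℝ) ^ ((e:ℝ)/2) -
        ∑ i ∈ e.properDivisors, ((q:ℝ)^i + 2 * g * (q:ℝ) ^ ((i:ℝ)/2)) := by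
  have hq0 : (0:ℝ) ≤ (q:ℝ) := by positivity
  have hq2 : (2:ℝ) ≤ (q:ℝ) := by exact_mod_cast hq
  set r : ℝ := (q:ℝ) ^ ((1:ℝ)/2) with hrdef
  have hr0 : 0 ≤ r := Real.rpow_nonneg hq0 _
  have hr2 : r ^ 2 = (q:ℝ) := by
    rw [hrdef, ← Real.rpow_natCast ((q:ℝ) ^ ((1:ℝ)/2)) 2, ← Real.rpow_mul hq0]
    norm_num
  have hr1 : 1 < r := by nlinarith
  have hpow : ∀ i : ℕ, (q:ℝ) ^ ((i:ℝ)/2) = r ^ i := by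
    intro i
    rw [hrdef, ← Real.rpow_natCast ((q:ℝ) ^ ((1:ℝ)/2)) i, ← Real.rpow_mul hq0]
    congr 1
    ring
  set m : ℕ := e / 2 with hmdef
  set s : ℝ := (q:ℝ) ^ ((e:ℝ)/4) with hsdef
  have hs2 : s ^ 2 = r ^ e := by
    rw [hsdef, ← hpow e, ← Real.rpow_natCast ((q:ℝ) ^ ((e:ℝ)/4)) 2,
      ← Real.rpow_mul hq0]
    congr 1
    ring
  have hms : r ^ m ≤ s := by
    rw [← hpow m, hsdef]
    apply Real.rpow_le_rpow_of_exponent_le (by linarith)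
    have h2m : 2 * m ≤ e := by omega
    have h2m' : (2 * m : ℝ) ≤ (e : ℝ) := by exact_mod_cast h2m
    push_cast at h2m' ⊢
    linarith
  have hsub : e.properDivisors ⊆ Finset.Icc 1 m := by
    intro i hi
    rw [Nat.mem_properDivisors] at hi
    obtain ⟨⟨k, hk⟩, hlt⟩ := hi
    have hi0 : 0 < i := by
      rcases Nat.eq_zero_or_pos i with h | h
      · subst h; simp at hk; omega
      · exact h
    have hk0 : k ≠ 0 := by rintro rfl; simp at hk; omega
    have hk1 : k ≠ 1 := by rintro rfl; simp at hk; omega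
    have hk2 : 2 ≤ k := by omega
    have h2i : i * 2 ≤ e := by
      rw [hk]; exact Nat.mul_le_mul le_rfl hk2
    rw [Finset.mem_Icc]
    omega
  have sum_mono_q : ∑ i ∈ e.properDivisors, (q:ℝ)^i ≤ ∑ i ∈ Finset.Icc 1 m, (q:ℝ)^i :=
    Finset.sum_le_sum_of_subset_of_nonneg hsub (fun i _ _ => by positivity)
  have sum_mono_r : ∑ i ∈ e.properDivisors, r^i ≤ ∑ i ∈ Finset.Icc 1 m, r^i :=
    Finset.sum_le_sum_of_subset_of_nonneg hsub (fun i _ _ => by positivity)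
  have hq_icc : ∑ i ∈ Finset.Icc 1 m, (q:ℝ)^i ≤ (q:ℝ)^(m+1) := by
    calc ∑ i ∈ Finset.Icc 1 m, (q:ℝ)^i ≤ ∑ i ∈ Finset.range (m+1), (q:ℝ)^i := by
          apply Finset.sum_le_sum_of_subset_of_nonneg
          · intro i hi
            simp only [Finset.mem_Icc] at hi
            simp only [Finset.mem_range]
            omega
          · intro i _ _
            positivity
    _ ≤ _ := geo_aux _ hq2 _
  have hicc_eq : ∑ i ∈ Finset.Icc 1 m, r^i = r * ∑ i ∈ Finset.range m, r^i := by
    rw [Finset.mul_sum, ← Finset.Ico_add_one_right_eq_Icc, Finset.sum_Ico_eq_sum_range]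
    simp [pow_add]
  have h34 : (4:ℝ) ≤ 3 * r := by nlinarith
  have hr_icc : ∑ i ∈ Finset.Icc 1 m, r^i ≤ s^2 := by
    rw [hicc_eq, geom_sum_eq (ne_of_gt hr1), mul_div_assoc',
      div_le_iff₀ (by linarith : (0:ℝ) < r - 1)]
    have hrs : r * r^m ≤ r * s := mul_le_mul_of_nonneg_left hms hr0
    nlinarith [sq_nonneg (2*(r-1)*s - r), mul_nonneg hr0 (by linarith : (0:ℝ) ≤ 3*r - 4)]
  -- bound q^(m+1) by q^e * q⁻¹
  have hqm : (q:ℝ)^(m+1) ≤ (q:ℝ)^e * (q:ℝ)⁻¹ := by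
    have hm2 : m + 2 ≤ e := by omega
    have h1 : (q:ℝ)^(m+2) ≤ (q:ℝ)^e := pow_le_pow_right₀ (by linarith) hm2
    have hq0' : (0:ℝ) < q := by linarith
    calc (q:ℝ)^(m+1) = (q:ℝ)^(m+2) * (q:ℝ)⁻¹ := by
            rw [pow_succ _ (m+1), mul_assoc, mul_inv_cancel₀ (ne_of_gt hq0'), mul_one]
      _ ≤ (q:ℝ)^e * (q:ℝ)⁻¹ := by
            apply mul_le_mul_of_nonneg_right h1 (by positivity)
  simp only [hpow]
  rw [Finset.sum_add_distrib]
  have hmul : ∑ i ∈ e.properDivisors, 2 * (g:ℝ) * r^i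
      = 2 * (g:ℝ) * ∑ i ∈ e.properDivisors, r^i := by
    rw [Finset.mul_sum]
  rw [hmul]
  have hg0 : (0:ℝ) ≤ 2 * (g:ℝ) := by positivity
  have hB : 2 * (g:ℝ) * ∑ i ∈ e.properDivisors, r^i ≤ 2 * (g:ℝ) * r^e := by
    apply mul_le_mul_of_nonneg_left _ hg0
    calc ∑ i ∈ e.properDivisors, r^i ≤ ∑ i ∈ Finset.Icc 1 m, r^i := sum_mono_r
    _ ≤ s^2 := hr_icc
    _ = r^e := hs2
  have hring : (q:ℝ)^e * (1 - (q:ℝ)⁻¹) = (q:ℝ)^e - (q:ℝ)^e * (q:ℝ)⁻¹ := by ring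
  linarith
end
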